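/- Let A be a (possibly unbounded) self-adjoint operator on a complex Hilbert space. For z with Im z > 0, if M(z) is a bounded operator with Im⟨ξ, M(z)ξ⟩ ≥ c_z‖ξ‖² for all ξ and some c_z > 0, then M(z) − A has a bounded everywhere-defined inverse. -/

import Mathlib

local notation "⟪" x ", " y "⟫" => @inner ℂ _ _ x y

private theorem pmap_congr {G : Type*} [NormedAddCommGroup G] [InnerProductSpace ℂ G]
    {T S : G →ₗ.[ℂ] G} (h : T = S) {x : G} (hx : x ∈ T.domain) :
    T ⟨x, hx⟩ = S ⟨x, h ▸ hx⟩ := by subst h; rfl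

theorem stmt6 {G : Type*} [NormedAddCommGroup G] [InnerProductSpace ℂ G] [CompleteSpace G]
    (A : G →ₗ.[ℂ] G) (hA : IsSelfAdjoint A)
    (M : G →L[ℂ] G) (c : ℝ) (hc : 0 < c)
    (hM : ∀ ξ : G, c * ‖ξ‖ ^ 2 ≤ (inner ℂ ξ (M ξ) : ℂ).im) :
    ∃ R : G →L[ℂ] G,
      (∀ y : G, ∃ h : R y ∈ A.domain, M (R y) - A ⟨R y, h⟩ = y) ∧
      (∀ x : A.domain, R (M x - A x) = (x : G)) := by
  have hAe : A.adjoint = A := hA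
  have hdense : Dense (A.domain : Set G) := hA.dense_domain
  -- symmetry of A
  have hsym : ∀ u v : A.domain, ⟪A u, (v : G)⟫ = ⟪(u : G), A v⟫ := by
    have h := LinearPMap.adjoint_isFormalAdjoint hdense (T := A)
    intro u v
    have hu : (u : G) ∈ A.adjoint.domain := by rw [hAe]; exact u.2
    have heq : A.adjoint ⟨(u : G), hu⟩ = A u :=
      (pmap_congr hAe hu).trans (congrArg (fun t : A.domain => A t) (Subtype.ext rfl))
    have h2 := h ⟨(u : G), hu⟩ v
    rwa [heq] at h2
  -- diagonal inner products with A are real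
  have hreal : ∀ u : A.domain, (⟪(u : G), A u⟫).im = 0 := by
    intro u
    have h1 : (starRingEnd ℂ) ⟪(u : G), A u⟫ = ⟪(u : G), A u⟫ := by
      rw [inner_conj_symm]; exact hsym u u
    exact Complex.conj_eq_iff_im.mp h1
  -- the operator S = M - A on dom A
  set S : A.domain →ₗ[ℂ] G := (M.toLinearMap.comp A.domain.subtype) - A.toFun with hSdef
  have hS : ∀ x : A.domain, S x = M (x : G) - A x := fun x => rfl
  -- key estimate
  have hest : ∀ x : A.domain, c * ‖(x : G)‖ ≤ ‖S x‖ := by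
    intro x
    have h2 : c * ‖(x : G)‖ ^ 2 ≤ (⟪(x : G), S x⟫).im := by
      rw [hS, inner_sub_right]
      have := hM (x : G)
      have hr := hreal x
      simp only [Complex.sub_im, hr, sub_zero]
      exact this
    have h3 : (⟪(x : G), S x⟫).im ≤ ‖(x : G)‖ * ‖S x‖ := by
      refine le_trans (Complex.im_le_norm _) ?_
      exact norm_inner_le_norm _ _
    rcases ((norm_nonneg (x : G)).eq_or_lt.imp Eq.symm id) with h0 | h0
    · rw [h0, mul_zero]
      exact norm_nonneg _
    · nlinarith [h2.trans h3]
  -- injectivity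
  have hinj : Function.Injective S := by
    intro a b hab
    have h0 : S (a - b) = 0 := by rw [map_sub, hab, sub_self]
    have h1 := hest (a - b)
    rw [h0, norm_zero] at h1
    have h2 : ‖((a - b : A.domain) : G)‖ = 0 :=
      le_antisymm (by nlinarith) (norm_nonneg _)
    have h3 : ((a - b : A.domain) : G) = 0 := norm_eq_zero.mp h2
    have : ((a : G)) - (b : G) = 0 := by simpa using h3
    exact Subtype.coe_injective (sub_eq_zero.mp this)
  -- density of the range
  have hdr : Dense (LinearMap.range S : Set G) := by
    have hbot : (LinearMap.range S)ᗮ = ⊥ := by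
      rw [Submodule.eq_bot_iff]
      intro v hv
      have hv' : ∀ x : A.domain, ⟪S x, v⟫ = 0 := fun x =>
        (Submodule.mem_orthogonal _ v).mp hv (S x) (LinearMap.mem_range.mpr ⟨x, rfl⟩)
      set Ms := ContinuousLinearMap.adjoint M with hMs
      have hkey : ∀ x : A.domain, ⟪Ms v, (x : G)⟫ = ⟪v, A x⟫ := by
        intro x
        have h1 : ⟪M (x : G), v⟫ = ⟪A x, v⟫ := by
          have := hv' x; rw [hS, inner_sub_left] at this; linear_combination this
        calc ⟪Ms v, (x : G)⟫ = ⟪v, M (x : G)⟫ := ContinuousLinearMap.adjoint_inner_left M _ v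
          _ = (starRingEnd ℂ) ⟪M (x : G), v⟫ := (inner_conj_symm v (M (x : G))).symm
          _ = (starRingEnd ℂ) ⟪A x, v⟫ := by rw [h1]
          _ = ⟪v, A x⟫ := inner_conj_symm v (A x)
      have hmem : v ∈ A.adjoint.domain :=
        LinearPMap.mem_adjoint_domain_of_exists v ⟨Ms v, hkey⟩
      have hval' : A.adjoint ⟨v, hmem⟩ = Ms v :=
        LinearPMap.adjoint_apply_eq hdense ⟨v, hmem⟩ hkey
      have hmemA : v ∈ A.domain := hAe ▸ hmem
      have hval : A ⟨v, hmemA⟩ = Ms v := by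
        rw [← hval', pmap_congr hAe hmem]
      -- Im ⟪v, M v⟫ = 0
      have h4 : (⟪v, A (⟨v, hmemA⟩ : A.domain)⟫).im = 0 := hreal ⟨v, hmemA⟩
      rw [hval] at h4
      have h5 : ⟪v, Ms v⟫ = (starRingEnd ℂ) ⟪v, M v⟫ := by
        rw [ContinuousLinearMap.adjoint_inner_right]
        exact (inner_conj_symm (M v) v).symm
      have h6 : (⟪v, M v⟫).im = 0 := by
        have := congrArg Complex.im h5
        rw [h4, Complex.conj_im] at this
        linarith
      have h7 := hM v
      rw [h6] at h7
      by_contra hne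
      have hpos : 0 < ‖v‖ := norm_pos_iff.mpr hne
      nlinarith [h7, mul_pos hc (mul_pos hpos hpos)]
    have htop := Submodule.topologicalClosure_eq_top_iff.mpr hbot
    rw [dense_iff_closure_eq, ← Submodule.topologicalClosure_coe, htop]
    rfl
  -- surjectivity
  have hsurj : Function.Surjective S := by
    intro y
    obtain ⟨u, hu_mem, hu_tend⟩ := mem_closure_iff_seq_limit.mp (hdr y)
    have hex : ∀ n, ∃ x : A.domain, S x = u n := fun n => LinearMap.mem_range.mp (hu_mem n)
    choose x hx using hex
    have hcu : CauchySeq u := hu_tend.cauchySeq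
    have hcx : CauchySeq fun n => ((x n : G)) := by
      rw [Metric.cauchySeq_iff] at hcu ⊢
      intro ε hε
      obtain ⟨N, hN⟩ := hcu (c * ε) (by positivity)
      refine ⟨N, fun m hm n hn => ?_⟩
      have key := hest (x m - x n)
      rw [map_sub, hx, hx] at key
      have hd := hN m hm n hn
      rw [dist_eq_norm] at hd ⊢
      have hco : ((x m - x n : A.domain) : G) = (x m : G) - (x n : G) := rfl
      rw [hco] at key
      nlinarith
    obtain ⟨x₀, hx₀⟩ := cauchySeq_tendsto_of_complete hcx
    have hAxn : ∀ n, A (x n) = M ((x n : G)) - u n := by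
      intro n
      have h1 : M ((x n : G)) - A (x n) = u n := by rw [← hS]; exact hx n
      rw [← h1]
      exact (sub_sub_cancel _ _).symm
    have hAx : Filter.Tendsto (fun n => A (x n)) Filter.atTop (nhds (M x₀ - y)) := by
      simp only [hAxn]
      exact ((M.continuous.tendsto x₀).comp hx₀).sub hu_tend
    set w := M x₀ - y with hw
    have hkey : ∀ z : A.domain, ⟪w, (z : G)⟫ = ⟪x₀, A z⟫ := by
      intro z
      have h1 : Filter.Tendsto (fun n => ⟪A (x n), (z : G)⟫) Filter.atTop (nhds ⟪w, (z : G)⟫) :=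
        hAx.inner tendsto_const_nhds
      have h2 : Filter.Tendsto (fun n => ⟪((x n : G)), A z⟫) Filter.atTop (nhds ⟪x₀, A z⟫) :=
        hx₀.inner tendsto_const_nhds
      have heq : (fun n => ⟪A (x n), (z : G)⟫) = fun n => ⟪((x n : G)), A z⟫ :=
        funext fun n => hsym (x n) z
      rw [heq] at h1
      exact tendsto_nhds_unique h1 h2
    have hmem : x₀ ∈ A.adjoint.domain :=
      LinearPMap.mem_adjoint_domain_of_exists x₀ ⟨w, hkey⟩
    have hmemA : x₀ ∈ A.domain := hAe ▸ hmem
    have hval : A ⟨x₀, hmemA⟩ = w := by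
      rw [← LinearPMap.adjoint_apply_eq hdense ⟨x₀, hmem⟩ hkey, pmap_congr hAe hmem]
    refine ⟨⟨x₀, hmemA⟩, ?_⟩
    rw [hS, hval, hw]
    exact sub_sub_cancel _ _
  -- build the inverse
  let e : A.domain ≃ₗ[ℂ] G := LinearEquiv.ofBijective S ⟨hinj, hsurj⟩
  have he : ∀ z : A.domain, e z = S z := fun z => rfl
  have hbound : ∀ y : G, ‖((e.symm y : A.domain) : G)‖ ≤ c⁻¹ * ‖y‖ := by
    intro y
    have h1 := hest (e.symm y)
    have h2 : S (e.symm y) = y := e.apply_symm_apply y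
    rw [h2] at h1
    nlinarith [mul_le_mul_of_nonneg_left h1 (le_of_lt (inv_pos.mpr hc)),
      mul_inv_cancel₀ (ne_of_gt hc), norm_nonneg ((e.symm y : A.domain) : G)]
  let R₀ : G →ₗ[ℂ] G := A.domain.subtype.comp (e.symm : G →ₗ[ℂ] A.domain)
  have hR₀ : ∀ y : G, R₀ y = ((e.symm y : A.domain) : G) := fun y => rfl
  have hb : ∀ y : G, ‖R₀ y‖ ≤ c⁻¹ * ‖y‖ := fun y => by rw [hR₀]; exact hbound y
  let R : G →L[ℂ] G := R₀.mkContinuous c⁻¹ hb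
  have hRy : ∀ y : G, R y = ((e.symm y : A.domain) : G) := fun y => rfl
  refine ⟨R, fun y => ?_, fun x => ?_⟩
  · refine ⟨(hRy y) ▸ (e.symm y).2, ?_⟩
    have hsub : (⟨R y, (hRy y) ▸ (e.symm y).2⟩ : A.domain) = e.symm y :=
      Subtype.ext (hRy y)
    rw [hsub, hRy, ← hS]
    exact e.apply_symm_apply y
  · have h1 : M (x : G) - A x = S x := (hS x).symm
    rw [h1, hRy, ← he, e.symm_apply_apply]
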